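/- arXiv:2009.01626 — 3 statements merged into one kernel-verified Lean document; each statement's English description precedes it below -/
import Mathlib

section
/- Let V ⊆ H be a continuous dense embedding of Hilbert spaces with ordering induced by a self-dual closed convex cone H₊, and let A : V → V* be linear, bounded, coercive, and T-monotone (⟨Au⁺, u⁻⟩ ≤ 0 for all u ∈ V). Then for f₁, f₂ ∈ V* with f₁ ≤ f₂ (meaning f₂ − f₁ ∈ V*₊), the solutions z₁, z₂ of Az₁ = f₁ and Az₂ = f₂ satisfy z₁ ≤ z₂. -/
/-! With `d = z₂ - z₁` and its negative part `m = d⁺ - d`, T-monotonicity and `f₁ ≤ f₂` give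
`⟨A m, m⟩ = ⟨A d⁺, m⟩ - ⟨A d, m⟩ ≤ 0`, so coercivity forces `m = 0`, i.e. `d = d⁺ ≥ 0`. -/

section Comparison

variable {V : Type*} [NormedAddCommGroup V] [NormedSpace ℝ V]

theorem eq_zero_of_coercive_of_apply_self_nonpos (A : V →ₗ[ℝ] StrongDual ℝ V) {Ca : ℝ}
    (hCa : 0 < Ca) (hcoer : ∀ u : V, Ca * ‖u‖ ^ 2 ≤ A u u) {m : V} (hm : A m m ≤ 0) :
    m = 0 := by
  have hsq : ‖m‖ ^ 2 ≤ 0 :=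
    nonpos_of_mul_nonpos_right ((hcoer m).trans hm) hCa
  exact norm_eq_zero.mp (pow_eq_zero_iff two_ne_zero |>.mp (le_antisymm hsq (sq_nonneg _)))

theorem mem_of_apply_nonneg_on_cone (C : Set V) (pos : V → V) (hposmem : ∀ u, pos u ∈ C)
    (hposneg : ∀ u, pos u - u ∈ C) (A : V →ₗ[ℝ] StrongDual ℝ V) {Ca : ℝ} (hCa : 0 < Ca)
    (hcoer : ∀ u : V, Ca * ‖u‖ ^ 2 ≤ A u u) (hTmon : ∀ u : V, A (pos u) (pos u - u) ≤ 0)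
    {d : V} (hd : ∀ v ∈ C, 0 ≤ A d v) : d ∈ C := by
  set m := pos d - d
  have hAm : A m m = A (pos d) m - A d m := by
    rw [show A m = A (pos d) - A d from map_sub A _ _, sub_apply]
  have hm : m = 0 :=
    eq_zero_of_coercive_of_apply_self_nonpos A hCa hcoer
      (by linarith [hTmon d, hd m (hposneg d)])
  rw [← sub_eq_zero.mp hm]
  exact hposmem d

end Comparison

theorem stmt1_general {V : Type*} [NormedAddCommGroup V] [InnerProductSpace ℝ V]
    (C : Set V)
    (pos : V → V) (hposmem : ∀ u, pos u ∈ C) (hposneg : ∀ u, pos u - u ∈ C)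
    (A : V →ₗ[ℝ] StrongDual ℝ V)
    (Ca : ℝ) (hCa : 0 < Ca)
    (hcoer : ∀ u : V, Ca * ‖u‖ ^ 2 ≤ A u u)
    (hTmon : ∀ u : V, A (pos u) (pos u - u) ≤ 0)
    (f₁ f₂ : StrongDual ℝ V)
    (hord : ∀ v ∈ C, 0 ≤ f₂ v - f₁ v)
    (z₁ z₂ : V) (hz₁ : A z₁ = f₁) (hz₂ : A z₂ = f₂) :
    z₂ - z₁ ∈ C := by
  refine mem_of_apply_nonneg_on_cone C pos hposmem hposneg A hCa hcoer hTmon fun v hv => ?_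
  simpa only [map_sub, hz₁, hz₂, sub_apply] using hord v hv

/-- comparison of solutions of `Az = f` for a bounded, coercive,
T-monotone linear operator `A : V → V*`: if `f₁ ≤ f₂` in the dual ordering induced by the
closed convex cone `C` (with `u ↦ u⁺` the positive-part map, `u⁻ := u⁺ - u`),
then `z₁ ≤ z₂`, i.e. `z₂ - z₁ ∈ C`. -/
theorem stmt1 {V : Type*} [NormedAddCommGroup V] [InnerProductSpace ℝ V] [CompleteSpace V]
    (C : Set V) (hCclosed : IsClosed C) (hCconv : Convex ℝ C)
    (hCcone : ∀ (c : ℝ) (x : V), 0 ≤ c → x ∈ C → c • x ∈ C)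
    (pos : V → V) (hposmem : ∀ u, pos u ∈ C) (hposneg : ∀ u, pos u - u ∈ C)
    (A : V →ₗ[ℝ] StrongDual ℝ V)
    (Cb Ca : ℝ) (hCa : 0 < Ca)
    (hbdd : ∀ u v : V, A u v ≤ Cb * ‖u‖ * ‖v‖)
    (hcoer : ∀ u : V, Ca * ‖u‖ ^ 2 ≤ A u u)
    (hTmon : ∀ u : V, A (pos u) (pos u - u) ≤ 0)
    (f₁ f₂ : StrongDual ℝ V)
    (hord : ∀ v ∈ C, 0 ≤ f₂ v - f₁ v)
    (z₁ z₂ : V) (hz₁ : A z₁ = f₁) (hz₂ : A z₂ = f₂) :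
    z₂ - z₁ ∈ C :=
  stmt1_general C pos hposmem hposneg A Ca hCa hcoer hTmon f₁ f₂ hord z₁ z₂ hz₁ hz₂
end

section
/- Continuous dependence of the obstacle VI solution on the obstacle: with A bounded (constant C_b) coercive (constant C_a) and T-monotone, if u_i = S(f, φ_i) solves the VI with obstacle φ_i ∈ V (i = 1,2) and common source f ∈ V*, then ‖u₁ − u₂‖_V ≤ C ‖φ₁ − φ₂‖_V for a constant C depending only on C_a, C_b (one may take C = 1 + (1 + C_b/C_a) in a suitable form; it suffices to prove existence of some constant C independent of f, φ₁, φ₂). -/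
section ObstacleProblem

variable {V : Type*} [NormedAddCommGroup V] [NormedSpace ℝ V]

/-- `u` solves the variational inequality with obstacle `φ`, source `f` and operator `A`, the
order being `x ≤ y ↔ y - x ∈ C`. -/
def IsObstacleSolution (C : Set V) (A : V →ₗ[ℝ] StrongDual ℝ V) (f : StrongDual ℝ V)
    (φ u : V) : Prop :=
  φ - u ∈ C ∧ ∀ v : V, φ - v ∈ C → A u (u - v) - f (u - v) ≤ 0

/-- Shifting by `φ₁ - φ₂` exchanges the feasible sets, so each solution can be tested
against the shifted other one. -/
theorem IsObstacleSolution.apply_sub_sub_nonpos {C : Set V} {A : V →ₗ[ℝ] StrongDual ℝ V}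
    {f : StrongDual ℝ V} {φ₁ φ₂ u₁ u₂ : V} (h₁ : IsObstacleSolution C A f φ₁ u₁)
    (h₂ : IsObstacleSolution C A f φ₂ u₂) :
    A (u₁ - u₂) ((u₁ - u₂) - (φ₁ - φ₂)) ≤ 0 := by
  have test₁ : A u₁ ((u₁ - u₂) - (φ₁ - φ₂)) - f ((u₁ - u₂) - (φ₁ - φ₂)) ≤ 0 := by
    have h := h₁.2 (u₂ + (φ₁ - φ₂)) (by convert h₂.1 using 1; abel)
    rwa [show u₁ - (u₂ + (φ₁ - φ₂)) = (u₁ - u₂) - (φ₁ - φ₂) by abel] at h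
  have test₂ : A u₂ (-((u₁ - u₂) - (φ₁ - φ₂))) - f (-((u₁ - u₂) - (φ₁ - φ₂))) ≤ 0 := by
    have h := h₂.2 (u₁ - (φ₁ - φ₂)) (by convert h₁.1 using 1; abel)
    rwa [show u₂ - (u₁ - (φ₁ - φ₂)) = -((u₁ - u₂) - (φ₁ - φ₂)) by abel] at h
  rw [map_neg, map_neg] at test₂
  rw [map_sub A u₁ u₂, sub_apply]
  linarith

theorem mul_norm_le_of_apply_sub_nonpos (A : V →ₗ[ℝ] StrongDual ℝ V) {Cb Ca : ℝ}
    (hbdd : ∀ u v : V, A u v ≤ Cb * ‖u‖ * ‖v‖) (hcoer : ∀ u : V, Ca * ‖u‖ ^ 2 ≤ A u u)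
    {w d : V} (h : A w (w - d) ≤ 0) :
    Ca * ‖w‖ ≤ |Cb| * ‖d‖ := by
  rcases (norm_nonneg w).eq_or_lt with hw | hw
  · rw [← hw, mul_zero]
    positivity
  have hAww : A w w ≤ A w d := by
    rw [map_sub] at h
    linarith
  have hsq : Ca * ‖w‖ ^ 2 ≤ |Cb| * ‖d‖ * ‖w‖ :=
    calc Ca * ‖w‖ ^ 2 ≤ A w d := (hcoer w).trans hAww
      _ ≤ Cb * ‖w‖ * ‖d‖ := hbdd w d
      _ ≤ |Cb| * ‖w‖ * ‖d‖ := by gcongr; exact le_abs_self Cb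
      _ = |Cb| * ‖d‖ * ‖w‖ := by ring
  nlinarith

end ObstacleProblem

theorem stmt3_general {V : Type*} [NormedAddCommGroup V] [InnerProductSpace ℝ V]
    (C : Set V)
    (A : V →ₗ[ℝ] StrongDual ℝ V)
    (Cb Ca : ℝ) (hCa : 0 < Ca)
    (hbdd : ∀ u v : V, A u v ≤ Cb * ‖u‖ * ‖v‖)
    (hcoer : ∀ u : V, Ca * ‖u‖ ^ 2 ≤ A u u) :
    ∃ Cc : ℝ, 0 < Cc ∧
      ∀ (f : StrongDual ℝ V) (φ₁ φ₂ u₁ u₂ : V),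
        (φ₁ - u₁ ∈ C) → (∀ v : V, φ₁ - v ∈ C → A u₁ (u₁ - v) - f (u₁ - v) ≤ 0) →
        (φ₂ - u₂ ∈ C) → (∀ v : V, φ₂ - v ∈ C → A u₂ (u₂ - v) - f (u₂ - v) ≤ 0) →
        ‖u₁ - u₂‖ ≤ Cc * ‖φ₁ - φ₂‖ := by
  refine ⟨(|Cb| + 1) / Ca, by positivity, fun f φ₁ φ₂ u₁ u₂ h1m h1 h2m h2 => ?_⟩
  have hA := IsObstacleSolution.apply_sub_sub_nonpos (C := C) (f := f) ⟨h1m, h1⟩ ⟨h2m, h2⟩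
  have hest := mul_norm_le_of_apply_sub_nonpos A hbdd hcoer hA
  rw [div_mul_eq_mul_div, le_div_iff₀ hCa]
  nlinarith [norm_nonneg (φ₁ - φ₂)]

/-- continuous dependence of the obstacle VI solution on the obstacle:
there is a constant `Cc` depending only on the operator `A` (through its boundedness and
coercivity constants `C_b`, `C_a`) such that for any common source `f` and obstacles
`φ₁, φ₂`, the VI solutions satisfy `‖u₁ - u₂‖ ≤ Cc * ‖φ₁ - φ₂‖`. -/
theorem stmt3 {V : Type*} [NormedAddCommGroup V] [InnerProductSpace ℝ V] [CompleteSpace V]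
    (C : Set V) (hCclosed : IsClosed C) (hCconv : Convex ℝ C)
    (hCcone : ∀ (c : ℝ) (x : V), 0 ≤ c → x ∈ C → c • x ∈ C)
    (pos : V → V) (hposmem : ∀ u, pos u ∈ C) (hposneg : ∀ u, pos u - u ∈ C)
    (A : V →ₗ[ℝ] StrongDual ℝ V)
    (Cb Ca : ℝ) (hCa : 0 < Ca)
    (hbdd : ∀ u v : V, A u v ≤ Cb * ‖u‖ * ‖v‖)
    (hcoer : ∀ u : V, Ca * ‖u‖ ^ 2 ≤ A u u)
    (hTmon : ∀ u : V, A (pos u) (pos u - u) ≤ 0) :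
    ∃ Cc : ℝ, 0 < Cc ∧
      ∀ (f : StrongDual ℝ V) (φ₁ φ₂ u₁ u₂ : V),
        (φ₁ - u₁ ∈ C) → (∀ v : V, φ₁ - v ∈ C → A u₁ (u₁ - v) - f (u₁ - v) ≤ 0) →
        (φ₂ - u₂ ∈ C) → (∀ v : V, φ₂ - v ∈ C → A u₂ (u₂ - v) - f (u₂ - v) ≤ 0) →
        ‖u₁ - u₂‖ ≤ Cc * ‖φ₁ - φ₂‖ :=
  stmt3_general C A Cb Ca hCa hbdd hcoer
end

section
/- The thermoforming obstacle map is completely continuous: with Φ(u) := Φ₀ + L T(u), where T(u) ∈ H¹(0,1) is the unique weak solution of kT − T'' = g(LT + Φ₀ − u) with Neumann boundary conditions, g Lipschitz, bounded, decreasing, and L : V → V bounded linear, if u_n → u in V = H¹(0,1) then Φ(u_n) → Φ(u) strongly in V. -/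
open MeasureTheory Filter Topology
open scoped RealInnerProductSpace ENNReal

/-!
The solutions `T(u)` satisfy the energy estimate `min k 1 · ‖T(u)‖ ≤ ‖g(⋯)‖_{L²}`, so they are
bounded in `V` because `g` is bounded. Given `u_n → u`, any subsequence of `T(u_n)` has a further
subsequence converging weakly to some `l`; by compactness of the embedding, `T(u_n)` and `L T(u_n)`
then converge in `L²`, so by the Lipschitz continuity of `g` the right-hand sides converge in `L²`.
Passing to the limit in the weak formulation shows that `l` solves the equation with datum `u`,
hence `l = T(u)` by uniqueness. Finally, the energy estimate applied to `T(u_n) - T(u)` upgrades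
weak to strong convergence, and the subsequence principle gives convergence of the whole sequence.
-/

section WeakCompactness

variable {V : Type*} [NormedAddCommGroup V] [InnerProductSpace ℝ V] [CompleteSpace V]

theorem exists_weakly_tendsto_subseq_of_separable [TopologicalSpace.SeparableSpace V]
    {T : ℕ → V} {C : ℝ} (hC : ∀ n, ‖T n‖ ≤ C) :
    ∃ φ : ℕ → ℕ, StrictMono φ ∧ ∃ l : V,
      ∀ z : V, Tendsto (fun n => ⟪T (φ n), z⟫) atTop (𝓝 ⟪l, z⟫) := by
  let x : ℕ → WeakDual ℝ V := fun n => InnerProductSpace.toDual ℝ V (T n)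
  have hx : ∀ n, x n ∈ WeakDual.toStrongDual ⁻¹' Metric.closedBall 0 C := fun n => by
    rw [Set.mem_preimage, mem_closedBall_zero_iff]
    exact ((InnerProductSpace.toDual ℝ V).norm_map (T n)).trans_le (hC n)
  obtain ⟨f, -, φ, hφ, hf⟩ := WeakDual.isSeqCompact_closedBall ℝ V 0 C hx
  refine ⟨φ, hφ, (InnerProductSpace.toDual ℝ V).symm (WeakDual.toStrongDual f), fun z => ?_⟩
  rw [InnerProductSpace.toDual_symm_apply]
  exact (tendsto_iff_forall_eval_tendsto_topDualPairing.mp hf) z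

theorem exists_weakly_tendsto_subseq {T : ℕ → V} {C : ℝ} (hC : ∀ n, ‖T n‖ ≤ C) :
    ∃ φ : ℕ → ℕ, StrictMono φ ∧ ∃ l : V,
      ∀ z : V, Tendsto (fun n => ⟪T (φ n), z⟫) atTop (𝓝 ⟪l, z⟫) := by
  -- The closed span of the sequence is separable, so sequential Banach–Alaoglu applies there.
  set W := (Submodule.span ℝ (Set.range T)).topologicalClosure
  have hTW : ∀ n, T n ∈ W := fun n =>
    Submodule.le_topologicalClosure _ (Submodule.subset_span ⟨n, rfl⟩)
  have : CompleteSpace W := (Submodule.isClosed_topologicalClosure _).completeSpace_coe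
  have : TopologicalSpace.SeparableSpace W :=
    (Set.countable_range T).isSeparable.span.closure.separableSpace
  obtain ⟨φ, hφ, l, hl⟩ :=
    exists_weakly_tendsto_subseq_of_separable (T := fun n => (⟨T n, hTW n⟩ : W)) hC
  refine ⟨φ, hφ, l, fun z => ?_⟩
  simpa using hl (W.orthogonalProjectionOnto z)

end WeakCompactness

theorem ContinuousLinearMap.tendsto_inner_apply {V W : Type*} [NormedAddCommGroup V]
    [InnerProductSpace ℝ V] [CompleteSpace V] [NormedAddCommGroup W] [InnerProductSpace ℝ W]
    [CompleteSpace W] (L : V →L[ℝ] W) {T : ℕ → V} {l : V}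
    (h : ∀ z : V, Tendsto (fun n => ⟪T n, z⟫) atTop (𝓝 ⟪l, z⟫)) (z : W) :
    Tendsto (fun n => ⟪L (T n), z⟫) atTop (𝓝 ⟪L l, z⟫) := by
  simpa only [ContinuousLinearMap.adjoint_inner_right] using h (L.adjoint z)

section WeakSolution

variable {V E F : Type*} [NormedAddCommGroup V] [InnerProductSpace ℝ V]
  [NormedAddCommGroup E] [InnerProductSpace ℝ E] [NormedAddCommGroup F] [InnerProductSpace ℝ F]
  (ι : V →ₗ[ℝ] E) (D : V →ₗ[ℝ] F)

/-- Weak form of `k T - T'' = f` with Neumann boundary conditions, where `ι` plays the embedding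
`H¹ ↪ L²` and `D` the derivative `H¹ → L²`. -/
def IsWeakSolution (k : ℝ) (T : V) (f : E) : Prop :=
  ∀ v : V, k * ⟪ι T, ι v⟫ + ⟪D T, D v⟫ = ⟪f, ι v⟫

variable {ι D}

theorem IsWeakSolution.sub {k : ℝ} {T₁ T₂ : V} {f₁ f₂ : E} (h₁ : IsWeakSolution ι D k T₁ f₁)
    (h₂ : IsWeakSolution ι D k T₂ f₂) : IsWeakSolution ι D k (T₁ - T₂) (f₁ - f₂) := fun v => by
  simp only [map_sub, inner_sub_left, ← h₁ v, ← h₂ v]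
  ring

variable (hnorm : ∀ v : V, ‖v‖ ^ 2 = ‖ι v‖ ^ 2 + ‖D v‖ ^ 2)
include hnorm

theorem inner_eq_inner_add_inner_of_norm_sq_eq (a b : V) :
    ⟪a, b⟫ = ⟪ι a, ι b⟫ + ⟪D a, D b⟫ := by
  simp only [real_inner_eq_norm_add_mul_self_sub_norm_mul_self_sub_norm_mul_self_div_two,
    ← map_add, ← sq, hnorm]
  ring

theorem norm_apply_le_of_norm_sq_eq (v : V) : ‖ι v‖ ≤ ‖v‖ :=
  (pow_le_pow_iff_left₀ (norm_nonneg _) (norm_nonneg _) two_ne_zero).1 <| by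
    rw [hnorm]; nlinarith [norm_nonneg (D v)]

theorem min_mul_norm_le_of_isWeakSolution {k : ℝ} {T : V} {f : E}
    (h : IsWeakSolution ι D k T f) : min k 1 * ‖T‖ ≤ ‖f‖ := by
  have coercive : min k 1 * ‖T‖ ^ 2 ≤ k * ‖ι T‖ ^ 2 + ‖D T‖ ^ 2 := by
    rw [hnorm]
    nlinarith [min_le_left k 1, min_le_right k 1, sq_nonneg ‖ι T‖, sq_nonneg ‖D T‖]
  have energy : k * ‖ι T‖ ^ 2 + ‖D T‖ ^ 2 ≤ ‖f‖ * ‖T‖ := by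
    simp only [← real_inner_self_eq_norm_sq, h T]
    exact (real_inner_le_norm _ _).trans
      (mul_le_mul_of_nonneg_left (norm_apply_le_of_norm_sq_eq hnorm T) (norm_nonneg _))
  rcases (norm_nonneg T).eq_or_lt with hT | hT
  · simp [← hT]
  · nlinarith

theorem IsWeakSolution.of_tendsto {k : ℝ} {T : ℕ → V} {l : V} {f : ℕ → E} {f' : E}
    (hT : ∀ n, IsWeakSolution ι D k (T n) (f n))
    (hweak : ∀ z : V, Tendsto (fun n => ⟪T n, z⟫) atTop (𝓝 ⟪l, z⟫))
    (hι : Tendsto (fun n => ι (T n)) atTop (𝓝 (ι l))) (hf : Tendsto f atTop (𝓝 f')) :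
    IsWeakSolution ι D k l f' := fun v => by
  have hιv := hι.inner (tendsto_const_nhds (x := ι v)) (𝕜 := ℝ)
  have hDv : Tendsto (fun n => ⟪D (T n), D v⟫) atTop (𝓝 ⟪D l, D v⟫) := by
    simpa only [inner_eq_inner_add_inner_of_norm_sq_eq hnorm, add_sub_cancel_left]
      using (hweak v).sub hιv
  exact tendsto_nhds_unique (((hιv.const_mul k).add hDv).congr fun n => hT n v)
    (hf.inner tendsto_const_nhds)

theorem tendsto_of_isWeakSolution {k : ℝ} (hk : 0 < k) {T : ℕ → V} {l : V} {f : ℕ → E}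
    {f' : E} (hT : ∀ n, IsWeakSolution ι D k (T n) (f n)) (hl : IsWeakSolution ι D k l f')
    (hf : Tendsto f atTop (𝓝 f')) : Tendsto T atTop (𝓝 l) := by
  have hc : 0 < min k 1 := lt_min hk one_pos
  rw [tendsto_iff_norm_sub_tendsto_zero] at hf ⊢
  refine squeeze_zero (fun n => norm_nonneg _) (fun n => ?_) (by simpa using hf.div_const (min k 1))
  exact (le_div_iff₀' hc).2 (min_mul_norm_le_of_isWeakSolution hnorm ((hT n).sub hl))

end WeakSolution

theorem continuous_of_abs_sub_le_mul {g : ℝ → ℝ} {K : ℝ}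
    (hg : ∀ a b, |g a - g b| ≤ K * |a - b|) : Continuous g :=
  (LipschitzWith.of_dist_le_mul (K := ⟨max K 0, le_max_right K 0⟩) fun a b => by
    simp only [Real.dist_eq]
    exact (hg a b).trans (mul_le_mul_of_nonneg_right (le_max_left K 0) (abs_nonneg _))).continuous

namespace MeasureTheory.Lp

variable {α : Type*} [MeasurableSpace α] {μ : Measure α} {p : ℝ≥0∞} {g : ℝ → ℝ}

theorem exists_ae_eq_comp [IsFiniteMeasure μ] [Fact (1 ≤ p)] (hg : Continuous g) {M : ℝ}
    (hM : ∀ r, ‖g r‖ ≤ M) (a : Lp ℝ p μ) : ∃ w : Lp ℝ p μ, w =ᵐ[μ] g ∘ a :=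
  ⟨_, (MemLp.of_bound (hg.comp_aestronglyMeasurable (Lp.aestronglyMeasurable a)) M
    (ae_of_all _ fun _ => hM _)).coeFn_toLp⟩

theorem norm_sub_le_of_ae_eq_comp {K : ℝ}
    (hg : ∀ a b, |g a - g b| ≤ K * |a - b|) {w₁ w₂ a₁ a₂ : Lp ℝ p μ}
    (h₁ : w₁ =ᵐ[μ] g ∘ a₁) (h₂ : w₂ =ᵐ[μ] g ∘ a₂) : ‖w₁ - w₂‖ ≤ K * ‖a₁ - a₂‖ := by
  refine norm_le_mul_norm_of_ae_le_mul ?_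
  filter_upwards [h₁, h₂, coeFn_sub w₁ w₂, coeFn_sub a₁ a₂] with x hx₁ hx₂ hw ha
  simpa only [hw, ha, Pi.sub_apply, hx₁, hx₂, Function.comp_apply, Real.norm_eq_abs] using hg _ _

theorem tendsto_of_ae_eq_comp [Fact (1 ≤ p)] {K : ℝ}
    (hg : ∀ a b, |g a - g b| ≤ K * |a - b|) {w a : ℕ → Lp ℝ p μ} {w' a' : Lp ℝ p μ}
    (hw : ∀ n, w n =ᵐ[μ] g ∘ a n) (hw' : w' =ᵐ[μ] g ∘ a') (ha : Tendsto a atTop (𝓝 a')) :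
    Tendsto w atTop (𝓝 w') := by
  rw [tendsto_iff_norm_sub_tendsto_zero] at ha ⊢
  exact squeeze_zero (fun n => norm_nonneg _)
    (fun n => norm_sub_le_of_ae_eq_comp hg (hw n) hw') (by simpa using ha.const_mul K)

theorem ae_eq_comp_add_sub_iff {w a b c : Lp ℝ p μ} :
    (w =ᵐ[μ] fun x => g (a x + b x - c x)) ↔ w =ᵐ[μ] g ∘ ⇑(a + b - c) := by
  have h : (fun x => g (a x + b x - c x)) =ᵐ[μ] g ∘ ⇑(a + b - c) := by
    filter_upwards [coeFn_sub (a + b) c, coeFn_add a b] with x hs ha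
    rw [Function.comp_apply, hs, Pi.sub_apply, ha, Pi.add_apply]
  exact ⟨fun hw => hw.trans h, fun hw => hw.trans h.symm⟩

end MeasureTheory.Lp

theorem stmt13_general
    {V : Type*} [NormedAddCommGroup V] [InnerProductSpace ℝ V] [CompleteSpace V]
    (μ : Measure ℝ) (hμ : μ = volume.restrict (Set.Ioo (0 : ℝ) 1))
    (ι : V →L[ℝ] Lp ℝ 2 μ) (D : V →ₗ[ℝ] Lp ℝ 2 μ)
    (hnorm : ∀ v : V, ‖v‖ ^ 2 = ‖ι v‖ ^ 2 + ‖D v‖ ^ 2)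
    -- compactness of the embedding H¹(0,1) ↪ L²(0,1): weak convergence in V gives
    -- strong convergence of the embedded sequence
    (hcompact : ∀ (vseq : ℕ → V) (l : V),
      (∀ z : V, Tendsto (fun n => ⟪vseq n, z⟫) atTop (nhds ⟪l, z⟫)) →
      Tendsto (fun n => ι (vseq n)) atTop (nhds (ι l)))
    (k : ℝ) (hk : 0 < k) (M Kg : ℝ)
    (g : ℝ → ℝ)
    (hgbdd : ∀ r : ℝ, 0 ≤ g r ∧ g r ≤ M)
    (hglip : ∀ a b : ℝ, |g a - g b| ≤ Kg * |a - b|)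
    (L : V →L[ℝ] V) (Φ₀ : V)
    (𝒯 : Lp ℝ 2 μ → V)
    -- `𝒯 u` is a weak solution of the temperature equation with datum `u` ...
    (hsol : ∀ u : Lp ℝ 2 μ, ∃ w : Lp ℝ 2 μ,
      ((w : ℝ → ℝ) =ᵐ[μ]
        fun x => g ((ι (L (𝒯 u)) : ℝ → ℝ) x + (ι Φ₀ : ℝ → ℝ) x - (u : ℝ → ℝ) x)) ∧
      ∀ v : V, k * ⟪ι (𝒯 u), ι v⟫ + ⟪D (𝒯 u), D v⟫ = ⟪w, ι v⟫)
    -- ... and it is the unique one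
    (huniq : ∀ (u : Lp ℝ 2 μ) (T : V), (∃ w : Lp ℝ 2 μ,
      ((w : ℝ → ℝ) =ᵐ[μ]
        fun x => g ((ι (L T) : ℝ → ℝ) x + (ι Φ₀ : ℝ → ℝ) x - (u : ℝ → ℝ) x)) ∧
      ∀ v : V, k * ⟪ι T, ι v⟫ + ⟪D T, D v⟫ = ⟪w, ι v⟫) → T = 𝒯 u)
    (useq : ℕ → V) (ulim : V)
    (hconv : Tendsto useq atTop (nhds ulim)) :
    Tendsto (fun n => Φ₀ + L (𝒯 (ι (useq n)))) atTop (nhds (Φ₀ + L (𝒯 (ι ulim)))) := by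
  have : IsFiniteMeasure μ := by rw [hμ]; infer_instance
  have hg : Continuous g := continuous_of_abs_sub_le_mul hglip
  have hg_norm : ∀ r, ‖g r‖ ≤ M := fun r => by
    rw [Real.norm_eq_abs, abs_of_nonneg (hgbdd r).1]; exact (hgbdd r).2
  choose w hw using hsol
  obtain ⟨C, hw_bdd⟩ : ∃ C, ∀ u, ‖w u‖ ≤ C := ⟨_, fun u =>
    Lp.norm_le_of_ae_bound ((norm_nonneg _).trans (hg_norm 0))
      ((hw u).1.mono fun x hx => hx ▸ hg_norm _)⟩
  have h𝒯_bdd : ∀ u, ‖𝒯 u‖ ≤ C / min k 1 :=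
    fun u => (le_div_iff₀' (lt_min hk one_pos)).2
      ((min_mul_norm_le_of_isWeakSolution hnorm (hw u).2).trans (hw_bdd u))
  refine tendsto_of_subseq_tendsto fun ns hns => ?_
  obtain ⟨φ, hφ, l, hl⟩ := exists_weakly_tendsto_subseq fun n => h𝒯_bdd (ι (useq (ns n)))
  have hu : Tendsto (fun n => ι (useq (ns (φ n)))) atTop (𝓝 (ι ulim)) :=
    (ι.continuous.tendsto _).comp (hconv.comp (hns.comp hφ.tendsto_atTop))
  have harg := ((hcompact _ _ (L.tendsto_inner_apply hl)).add_const (ι Φ₀)).sub hu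
  obtain ⟨w', hw'⟩ := Lp.exists_ae_eq_comp hg hg_norm (ι (L l) + ι Φ₀ - ι ulim)
  have hw_tendsto : Tendsto (fun n => w (ι (useq (ns (φ n))))) atTop (𝓝 w') :=
    Lp.tendsto_of_ae_eq_comp hglip (fun n => Lp.ae_eq_comp_add_sub_iff.1 (hw _).1) hw' harg
  have hl_sol : IsWeakSolution ι D k l w' :=
    .of_tendsto hnorm (fun n => (hw _).2) hl (hcompact _ _ hl) hw_tendsto
  have hl_eq : l = 𝒯 (ι ulim) := huniq _ _ ⟨w', Lp.ae_eq_comp_add_sub_iff.2 hw', hl_sol⟩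
  refine ⟨φ, hl_eq ▸ tendsto_const_nhds.add ((L.continuous.tendsto l).comp ?_)⟩
  exact tendsto_of_isWeakSolution hnorm hk (fun n => (hw _).2) hl_sol hw_tendsto

/-- complete continuity of the thermoforming obstacle map
`Φ(u) = Φ₀ + L T(u)`, where `T(u) ∈ V` (with `V` abstracting `H¹(0,1)` via the embedding
`ι : V → L²((0,1))`, the derivative map `D`, the norm identity, and the compactness of the
embedding `H¹(0,1) ↪ L²(0,1)`) is the unique weak solution of
`kT - T'' = g(LT + Φ₀ - u)` with Neumann boundary conditions, `g` Lipschitz, bounded and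
decreasing, `L` bounded linear: if `u_n → u` in `V` then `Φ(u_n) → Φ(u)` strongly in `V`. -/
theorem stmt13
    {V : Type*} [NormedAddCommGroup V] [InnerProductSpace ℝ V] [CompleteSpace V]
    (μ : Measure ℝ) (hμ : μ = volume.restrict (Set.Ioo (0 : ℝ) 1))
    (ι : V →L[ℝ] Lp ℝ 2 μ) (D : V →ₗ[ℝ] Lp ℝ 2 μ)
    (hnorm : ∀ v : V, ‖v‖ ^ 2 = ‖ι v‖ ^ 2 + ‖D v‖ ^ 2)
    -- compactness of the embedding H¹(0,1) ↪ L²(0,1): weak convergence in V gives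
    -- strong convergence of the embedded sequence
    (hcompact : ∀ (vseq : ℕ → V) (l : V),
      (∀ z : V, Tendsto (fun n => ⟪vseq n, z⟫) atTop (nhds ⟪l, z⟫)) →
      Tendsto (fun n => ι (vseq n)) atTop (nhds (ι l)))
    (k : ℝ) (hk : 0 < k) (M Kg : ℝ)
    (g : ℝ → ℝ)
    (hgbdd : ∀ r : ℝ, 0 ≤ g r ∧ g r ≤ M)
    (hglip : ∀ a b : ℝ, |g a - g b| ≤ Kg * |a - b|)
    (hgdec : Antitone g)
    (L : V →L[ℝ] V) (Φ₀ : V)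
    (𝒯 : Lp ℝ 2 μ → V)
    -- `𝒯 u` is a weak solution of the temperature equation with datum `u` ...
    (hsol : ∀ u : Lp ℝ 2 μ, ∃ w : Lp ℝ 2 μ,
      ((w : ℝ → ℝ) =ᵐ[μ]
        fun x => g ((ι (L (𝒯 u)) : ℝ → ℝ) x + (ι Φ₀ : ℝ → ℝ) x - (u : ℝ → ℝ) x)) ∧
      ∀ v : V, k * ⟪ι (𝒯 u), ι v⟫ + ⟪D (𝒯 u), D v⟫ = ⟪w, ι v⟫)
    -- ... and it is the unique one
    (huniq : ∀ (u : Lp ℝ 2 μ) (T : V), (∃ w : Lp ℝ 2 μ,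
      ((w : ℝ → ℝ) =ᵐ[μ]
        fun x => g ((ι (L T) : ℝ → ℝ) x + (ι Φ₀ : ℝ → ℝ) x - (u : ℝ → ℝ) x)) ∧
      ∀ v : V, k * ⟪ι T, ι v⟫ + ⟪D T, D v⟫ = ⟪w, ι v⟫) → T = 𝒯 u)
    (useq : ℕ → V) (ulim : V)
    (hconv : Tendsto useq atTop (nhds ulim)) :
    Tendsto (fun n => Φ₀ + L (𝒯 (ι (useq n)))) atTop (nhds (Φ₀ + L (𝒯 (ι ulim)))) :=
  stmt13_general μ hμ ι D hnorm hcompact k hk M Kg g hgbdd hglip L Φ₀ 𝒯 hsol huniq useq ulim hconv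
end
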